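/- arXiv:2511.21836 — 2 statements merged into one kernel-verified Lean document; each statement's English description precedes it below -/
import Mathlib

section
/- Hazard ratios are stable under the null only without a time-1 effect. In the explicit data-generating model, assume 0 < q1 < 1, 0 < q2, πA ∈ (0,1), pd + ph < 1, pd + pr < 1, pd + ph > 0 and pd + pr > 0. Then HR1 := E[ΔY1 | A = 1]/E[ΔY1 | A = 0] equals HR2 := E[ΔY2 | ΔY1 = 0, A = 1]/E[ΔY2 | ΔY1 = 0, A = 0] if and only if ph = pr, which holds if and only if P(ΔY1 = 0 | A = 1) = P(ΔY1 = 0 | A = 0); i.e., under the sharp null (which holds by construction of the model), the two hazard ratios coincide exactly when the vaccine has no population-level effect on interval-1 survival. -/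
/-!
Under the sharp null a subject's response to exposure is fixed by its type, so in arm `a` the
interval-1 hazard is `q1 * r a`, where `r a` is the mass of the types that respond under `a`
(`pd + pr` with vaccine, `pd + ph` with placebo). Interval 1 depletes the responders, so among the
interval-1 survivors the interval-2 hazard is `(1 - q1) * q2 * r a / (1 - q1 * r a)`. Hence
`HR2 = HR1 * (1 - q1 * r 0) / (1 - q1 * r 1)`: the two hazard ratios agree exactly when
`r 1 = r 0`, i.e. `ph = pr`, which is also exactly when interval-1 survival `1 - q1 * r a` does not
depend on the arm.
-/

open MeasureTheory ProbabilityTheory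
open scoped ProbabilityTheory

section MeasureReal

variable {Ω : Type*} [MeasurableSpace Ω] {μ : Measure Ω} {s : Set Ω} {g : Ω → ℝ}

lemma integral_eq_measureReal_of_zero_or_one (hg : Measurable g)
    (hg01 : ∀ ω, g ω = 0 ∨ g ω = 1) : ∫ ω, g ω ∂μ = μ.real {ω | g ω = 1} := by
  calc ∫ ω, g ω ∂μ = ∫ ω, {ω | g ω = 1}.indicator 1 ω ∂μ := by
        congr 1 with ω
        rcases hg01 ω with h | h <;> simp [h]
    _ = μ.real {ω | g ω = 1} := integral_indicator_one (hg (measurableSet_singleton 1))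

lemma measureReal_inter_setOf_eq_zero [IsFiniteMeasure μ] (hg : Measurable g)
    (hg01 : ∀ ω, g ω = 0 ∨ g ω = 1) (s : Set Ω) :
    μ.real (s ∩ {ω | g ω = 0}) = μ.real s - μ.real (s ∩ {ω | g ω = 1}) := by
  have hzero : {ω | g ω = 0} = {ω | g ω = 1}ᶜ := by
    ext ω
    rcases hg01 ω with h | h <;> simp [h]
  rw [hzero, ← Set.sdiff_eq]
  exact eq_sub_of_add_eq' (measureReal_inter_add_sdiff (hg (measurableSet_singleton 1)))

lemma measureReal_setOf_eq_zero [IsProbabilityMeasure μ] (hg : Measurable g)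
    (hg01 : ∀ ω, g ω = 0 ∨ g ω = 1) :
    μ.real {ω | g ω = 0} = 1 - μ.real {ω | g ω = 1} := by
  simpa using measureReal_inter_setOf_eq_zero (μ := μ) hg hg01 Set.univ

lemma cond_real_apply (hs : MeasurableSet s) (t : Set Ω) :
    (μ[|s]).real t = μ.real (s ∩ t) / μ.real s := by
  rw [measureReal_def, cond_apply hs, ENNReal.toReal_mul, ENNReal.toReal_inv, div_eq_inv_mul,
    measureReal_def, measureReal_def]

end MeasureReal

lemma measureReal_setOf_eq_or_eq {Ω β : Type*} [MeasurableSpace Ω] [MeasurableSpace β]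
    [MeasurableSingletonClass β] {μ : Measure Ω} [IsFiniteMeasure μ] {X : Ω → β}
    (hX : Measurable X) {x y : β} (hxy : x ≠ y) :
    μ.real (X ⁻¹' {x, y}) = μ.real {ω | X ω = x} + μ.real {ω | X ω = y} := by
  rw [Set.insert_eq, Set.preimage_union]
  exact measureReal_union ((Set.disjoint_singleton.mpr hxy).preimage X)
    (hX (measurableSet_singleton y))

lemma ProbabilityTheory.iIndepFun.measureReal_inter_preimage_four {Ω β : Type*}
    [MeasurableSpace Ω] [MeasurableSpace β] {μ : Measure Ω} {X₀ X₁ X₂ X₃ : Ω → β}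
    (h : iIndepFun ![X₀, X₁, X₂, X₃] μ)
    {s₀ s₁ s₂ s₃ : Set β} (h₀ : MeasurableSet s₀) (h₁ : MeasurableSet s₁)
    (h₂ : MeasurableSet s₂) (h₃ : MeasurableSet s₃) :
    μ.real (X₀ ⁻¹' s₀ ∩ X₁ ⁻¹' s₁ ∩ X₂ ⁻¹' s₂ ∩ X₃ ⁻¹' s₃) =
      μ.real (X₀ ⁻¹' s₀) * μ.real (X₁ ⁻¹' s₁) * μ.real (X₂ ⁻¹' s₂) *
        μ.real (X₃ ⁻¹' s₃) := by
  have H := h.measure_inter_preimage_eq_mul (S := Finset.univ) (sets := ![s₀, s₁, s₂, s₃])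
    (fun i _ => by fin_cases i <;> assumption)
  have hinter :
      ⋂ i ∈ Finset.univ, ![X₀, X₁, X₂, X₃] i ⁻¹' ![s₀, s₁, s₂, s₃] i =
      X₀ ⁻¹' s₀ ∩ X₁ ⁻¹' s₁ ∩ X₂ ⁻¹' s₂ ∩ X₃ ⁻¹' s₃ := by
    ext ω
    simp [Fin.forall_fin_succ, and_assoc]
  rw [hinter, Fin.prod_univ_four] at H
  simp [measureReal_def, H]

lemma hazard_ratios_eq_iff {q q₂ x y : ℝ} (hq₀ : 0 < q) (hq₁ : q < 1) (hq₂ : 0 < q₂)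
    (hx₀ : 0 < x) (hx₁ : x ≤ 1) (hy₀ : 0 < y) (hy₁ : y ≤ 1) :
    x * q / (y * q) = x * (1 - q) * q₂ / (1 - x * q) / (y * (1 - q) * q₂ / (1 - y * q)) ↔
      x = y := by
  have hxq : 0 < 1 - x * q := by nlinarith
  have hyq : 0 < 1 - y * q := by nlinarith
  have h1q : 0 < 1 - q := by linarith
  rw [mul_div_mul_right _ _ hq₀.ne', div_div_div_eq,
    div_eq_div_iff (by positivity) (by positivity)]
  constructor
  · intro h
    have hprod : (x * y * q * (1 - q) * q₂) * (x - y) = 0 := by linear_combination -h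
    exact sub_eq_zero.mp ((mul_eq_zero.mp hprod).resolve_left (by positivity))
  · rintro rfl
    ring

-- The response `f(t, a)` of an exposed subject of type `t` under treatment `a`.
noncomputable def potentialOutcome (t a : ℝ) : ℝ :=
  (if t = 1 then 1 else 0) + (1 - a) * (if t = 2 then 1 else 0) + a * (if t = 3 then 1 else 0)

def susceptible (a : ℝ) : Set ℝ := {t | potentialOutcome t a = 1}

lemma potentialOutcome_eq_zero_or_one {a : ℝ} (ha : a = 0 ∨ a = 1) (t : ℝ) :
    potentialOutcome t a = 0 ∨ potentialOutcome t a = 1 := by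
  unfold potentialOutcome
  rcases ha with rfl | rfl <;> split_ifs <;> simp_all

lemma susceptible_one : susceptible 1 = {1, 3} := by
  ext t
  change potentialOutcome t 1 = 1 ↔ t = 1 ∨ t = 3
  unfold potentialOutcome
  split_ifs <;> simp_all

lemma susceptible_zero : susceptible 0 = {1, 2} := by
  ext t
  change potentialOutcome t 0 = 1 ↔ t = 1 ∨ t = 2
  unfold potentialOutcome
  split_ifs <;> simp_all

lemma Measurable.potentialOutcome {α : Type*} [MeasurableSpace α] {T A : α → ℝ}
    (hT : Measurable T) (hA : Measurable A) :
    Measurable fun ω => potentialOutcome (T ω) (A ω) := by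
  have hind (c : ℝ) : Measurable fun ω => if T ω = c then (1 : ℝ) else 0 :=
    Measurable.ite (hT (measurableSet_singleton c)) measurable_const measurable_const
  exact ((hind 1).add ((measurable_const.sub hA).mul (hind 2))).add (hA.mul (hind 3))

lemma measurableSet_susceptible (a : ℝ) : MeasurableSet (susceptible a) :=
  measurable_id.potentialOutcome measurable_const (measurableSet_singleton 1)

structure IsTwoIntervalTrial {Ω : Type*} [MeasurableSpace Ω] (μ : Measure Ω)
    (A T E1 B2 DY1 E2 DY2 : Ω → ℝ) : Prop where
  measurable_A : Measurable A
  measurable_T : Measurable T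
  measurable_E1 : Measurable E1
  measurable_B2 : Measurable B2
  indep : iIndepFun ![A, T, E1, B2] μ
  A_eq_zero_or_one : ∀ ω, A ω = 0 ∨ A ω = 1
  E1_eq_zero_or_one : ∀ ω, E1 ω = 0 ∨ E1 ω = 1
  B2_eq_zero_or_one : ∀ ω, B2 ω = 0 ∨ B2 ω = 1
  DY1_eq : ∀ ω, DY1 ω = E1 ω * potentialOutcome (T ω) (A ω)
  E2_eq : ∀ ω, E2 ω = (1 - DY1 ω) * B2 ω
  DY2_eq : ∀ ω, DY2 ω = E2 ω * potentialOutcome (T ω) (A ω)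

namespace IsTwoIntervalTrial

variable {Ω : Type*} [MeasurableSpace Ω] {μ : Measure Ω} {A T E1 B2 DY1 E2 DY2 : Ω → ℝ}

lemma potentialOutcome_eq_zero_or_one (h : IsTwoIntervalTrial μ A T E1 B2 DY1 E2 DY2) (ω : Ω) :
    potentialOutcome (T ω) (A ω) = 0 ∨ potentialOutcome (T ω) (A ω) = 1 :=
  _root_.potentialOutcome_eq_zero_or_one (h.A_eq_zero_or_one ω) (T ω)

lemma DY1_eq_zero_or_one (h : IsTwoIntervalTrial μ A T E1 B2 DY1 E2 DY2) (ω : Ω) :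
    DY1 ω = 0 ∨ DY1 ω = 1 := by
  rw [h.DY1_eq]
  rcases h.E1_eq_zero_or_one ω with he | he <;>
    rcases h.potentialOutcome_eq_zero_or_one ω with hf | hf <;> simp [he, hf]

lemma DY2_eq_zero_or_one (h : IsTwoIntervalTrial μ A T E1 B2 DY1 E2 DY2) (ω : Ω) :
    DY2 ω = 0 ∨ DY2 ω = 1 := by
  rw [h.DY2_eq, h.E2_eq, h.DY1_eq]
  rcases h.E1_eq_zero_or_one ω with he | he <;> rcases h.B2_eq_zero_or_one ω with hb | hb <;>
    rcases h.potentialOutcome_eq_zero_or_one ω with hf | hf <;> simp [he, hb, hf]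

lemma measurable_DY1 (h : IsTwoIntervalTrial μ A T E1 B2 DY1 E2 DY2) : Measurable DY1 := by
  rw [funext h.DY1_eq]
  exact h.measurable_E1.mul (h.measurable_T.potentialOutcome h.measurable_A)

lemma measurable_DY2 (h : IsTwoIntervalTrial μ A T E1 B2 DY1 E2 DY2) : Measurable DY2 := by
  rw [funext h.DY2_eq, funext h.E2_eq]
  exact ((measurable_const.sub h.measurable_DY1).mul h.measurable_B2).mul
    (h.measurable_T.potentialOutcome h.measurable_A)

lemma DY1_eq_one_iff (h : IsTwoIntervalTrial μ A T E1 B2 DY1 E2 DY2) (ω : Ω) :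
    DY1 ω = 1 ↔ E1 ω = 1 ∧ T ω ∈ susceptible (A ω) := by
  change _ ↔ _ ∧ potentialOutcome (T ω) (A ω) = 1
  rw [h.DY1_eq]
  rcases h.E1_eq_zero_or_one ω with he | he <;> simp [he]

lemma DY2_eq_one_iff (h : IsTwoIntervalTrial μ A T E1 B2 DY1 E2 DY2) (ω : Ω) :
    DY2 ω = 1 ↔ E1 ω = 0 ∧ B2 ω = 1 ∧ T ω ∈ susceptible (A ω) := by
  change _ ↔ _ ∧ _ ∧ potentialOutcome (T ω) (A ω) = 1
  rw [h.DY2_eq, h.E2_eq, h.DY1_eq]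
  rcases h.E1_eq_zero_or_one ω with he | he <;> rcases h.B2_eq_zero_or_one ω with hb | hb <;>
    rcases h.potentialOutcome_eq_zero_or_one ω with hf | hf <;> simp [he, hb, hf]

lemma setOf_A_inter_DY1_eq_one (h : IsTwoIntervalTrial μ A T E1 B2 DY1 E2 DY2) (a : ℝ) :
    {ω | A ω = a} ∩ {ω | DY1 ω = 1} =
      A ⁻¹' {a} ∩ T ⁻¹' susceptible a ∩ E1 ⁻¹' {1} ∩ B2 ⁻¹' Set.univ := by
  ext ω
  simp only [Set.mem_inter_iff, Set.mem_preimage, Set.mem_singleton_iff, Set.mem_univ, and_true]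
  change _ ∧ DY1 ω = 1 ↔ _
  rw [h.DY1_eq_one_iff]
  constructor
  · rintro ⟨rfl, he, ht⟩; exact ⟨⟨rfl, ht⟩, he⟩
  · rintro ⟨⟨rfl, ht⟩, he⟩; exact ⟨rfl, he, ht⟩

lemma setOf_DY1_eq_zero_and_A_inter_DY2_eq_one
    (h : IsTwoIntervalTrial μ A T E1 B2 DY1 E2 DY2) (a : ℝ) :
    {ω | DY1 ω = 0 ∧ A ω = a} ∩ {ω | DY2 ω = 1} =
      A ⁻¹' {a} ∩ T ⁻¹' susceptible a ∩ E1 ⁻¹' {0} ∩ B2 ⁻¹' {1} := by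
  ext ω
  simp only [Set.mem_inter_iff, Set.mem_preimage, Set.mem_singleton_iff]
  change (DY1 ω = 0 ∧ A ω = a) ∧ DY2 ω = 1 ↔ _
  rw [h.DY2_eq_one_iff]
  constructor
  · rintro ⟨⟨-, rfl⟩, he, hb, ht⟩; exact ⟨⟨⟨rfl, ht⟩, he⟩, hb⟩
  · rintro ⟨⟨⟨rfl, ht⟩, he⟩, hb⟩
    exact ⟨⟨by rw [h.DY1_eq, he, zero_mul], rfl⟩, he, hb, ht⟩

variable [IsProbabilityMeasure μ]

lemma measureReal_A_inter_DY1_eq_one (h : IsTwoIntervalTrial μ A T E1 B2 DY1 E2 DY2) (a : ℝ) :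
    μ.real ({ω | A ω = a} ∩ {ω | DY1 ω = 1}) =
      μ.real {ω | A ω = a} * μ.real (T ⁻¹' susceptible a) * μ.real {ω | E1 ω = 1} := by
  rw [h.setOf_A_inter_DY1_eq_one, h.indep.measureReal_inter_preimage_four
    (measurableSet_singleton a) (measurableSet_susceptible a) (measurableSet_singleton 1)
    MeasurableSet.univ, Set.preimage_univ, probReal_univ, mul_one]
  rfl

lemma measureReal_A_inter_DY1_eq_zero (h : IsTwoIntervalTrial μ A T E1 B2 DY1 E2 DY2) (a : ℝ) :
    μ.real ({ω | A ω = a} ∩ {ω | DY1 ω = 0}) =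
      μ.real {ω | A ω = a} *
        (1 - μ.real (T ⁻¹' susceptible a) * μ.real {ω | E1 ω = 1}) := by
  rw [measureReal_inter_setOf_eq_zero h.measurable_DY1 h.DY1_eq_zero_or_one,
    h.measureReal_A_inter_DY1_eq_one]
  ring

lemma measureReal_DY1_eq_zero_and_A_inter_DY2_eq_one
    (h : IsTwoIntervalTrial μ A T E1 B2 DY1 E2 DY2) (a : ℝ) :
    μ.real ({ω | DY1 ω = 0 ∧ A ω = a} ∩ {ω | DY2 ω = 1}) =
      μ.real {ω | A ω = a} * μ.real (T ⁻¹' susceptible a) * (1 - μ.real {ω | E1 ω = 1}) *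
        μ.real {ω | B2 ω = 1} := by
  rw [h.setOf_DY1_eq_zero_and_A_inter_DY2_eq_one, h.indep.measureReal_inter_preimage_four
    (measurableSet_singleton a) (measurableSet_susceptible a) (measurableSet_singleton 0)
    (measurableSet_singleton 1), ← measureReal_setOf_eq_zero h.measurable_E1 h.E1_eq_zero_or_one]
  rfl

variable {a : ℝ}

lemma integral_DY1_cond_A (h : IsTwoIntervalTrial μ A T E1 B2 DY1 E2 DY2)
    (ha : μ.real {ω | A ω = a} ≠ 0) :
    ∫ ω, DY1 ω ∂μ[|{ω | A ω = a}] =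
      μ.real (T ⁻¹' susceptible a) * μ.real {ω | E1 ω = 1} := by
  rw [integral_eq_measureReal_of_zero_or_one h.measurable_DY1 h.DY1_eq_zero_or_one,
    cond_real_apply (s := {ω | A ω = a}) (h.measurable_A (measurableSet_singleton a)),
    h.measureReal_A_inter_DY1_eq_one, mul_assoc, mul_div_cancel_left₀ _ ha]

lemma cond_A_real_DY1_eq_zero (h : IsTwoIntervalTrial μ A T E1 B2 DY1 E2 DY2)
    (ha : μ.real {ω | A ω = a} ≠ 0) :
    (μ[|{ω | A ω = a}]).real {ω | DY1 ω = 0} =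
      1 - μ.real (T ⁻¹' susceptible a) * μ.real {ω | E1 ω = 1} := by
  rw [cond_real_apply (s := {ω | A ω = a}) (h.measurable_A (measurableSet_singleton a)),
    h.measureReal_A_inter_DY1_eq_zero, mul_div_cancel_left₀ _ ha]

lemma integral_DY2_cond_DY1_eq_zero_and_A (h : IsTwoIntervalTrial μ A T E1 B2 DY1 E2 DY2)
    (ha : μ.real {ω | A ω = a} ≠ 0) :
    ∫ ω, DY2 ω ∂μ[|{ω | DY1 ω = 0 ∧ A ω = a}] =
      μ.real (T ⁻¹' susceptible a) * (1 - μ.real {ω | E1 ω = 1}) * μ.real {ω | B2 ω = 1} /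
        (1 - μ.real (T ⁻¹' susceptible a) * μ.real {ω | E1 ω = 1}) := by
  have hset : {ω | DY1 ω = 0 ∧ A ω = a} = {ω | A ω = a} ∩ {ω | DY1 ω = 0} := by
    ext ω
    exact and_comm
  rw [integral_eq_measureReal_of_zero_or_one h.measurable_DY2 h.DY2_eq_zero_or_one,
    cond_real_apply (s := {ω | DY1 ω = 0 ∧ A ω = a})
      ((h.measurable_DY1 (measurableSet_singleton 0)).inter
      (h.measurable_A (measurableSet_singleton a))),
    h.measureReal_DY1_eq_zero_and_A_inter_DY2_eq_one, hset, h.measureReal_A_inter_DY1_eq_zero]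
  simp only [mul_assoc, mul_div_mul_left _ _ ha]

end IsTwoIntervalTrial

theorem hazard_ratios_stable_iff_no_time_one_effect_general
    {Ω : Type*} [MeasurableSpace Ω] (μ : Measure Ω) [IsProbabilityMeasure μ]
    (A T E1 B2 DY1 E2 DY2 : Ω → ℝ)
    (hAm : Measurable A) (hTm : Measurable T) (hE1m : Measurable E1) (hB2m : Measurable B2)
    (piA pd ph pr q1 q2 : ℝ)
    -- mutual independence of A, T, E1, B2
    (hindep : iIndepFun
      ![A, T, E1, B2] μ)
    -- ranges
    (hAr : ∀ ω, A ω = 0 ∨ A ω = 1)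
    (hE1r : ∀ ω, E1 ω = 0 ∨ E1 ω = 1)
    (hB2r : ∀ ω, B2 ω = 0 ∨ B2 ω = 1)
    -- marginal distributions
    (hA1 : (μ {ω | A ω = 1}).toReal = piA)
    (hT1 : (μ {ω | T ω = 1}).toReal = pd)
    (hT2 : (μ {ω | T ω = 2}).toReal = ph)
    (hT3 : (μ {ω | T ω = 3}).toReal = pr)
    (hE11 : (μ {ω | E1 ω = 1}).toReal = q1)
    (hB21 : (μ {ω | B2 ω = 1}).toReal = q2)
    -- structural equations
    (hDY1 : ∀ ω, DY1 ω = E1 ω *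
      ((if T ω = 1 then 1 else 0) + (1 - A ω) * (if T ω = 2 then 1 else 0) +
        A ω * (if T ω = 3 then 1 else 0)))
    (hE2 : ∀ ω, E2 ω = (1 - DY1 ω) * B2 ω)
    (hDY2 : ∀ ω, DY2 ω = E2 ω *
      ((if T ω = 1 then 1 else 0) + (1 - A ω) * (if T ω = 2 then 1 else 0) +
        A ω * (if T ω = 3 then 1 else 0)))
    -- parameter constraints
    (hq1pos : 0 < q1) (hq1lt : q1 < 1) (hq2pos : 0 < q2)
    (hpiApos : 0 < piA) (hpiAlt : piA < 1)
    (hphlt : pd + ph < 1) (hprlt : pd + pr < 1)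
    (hphpos : 0 < pd + ph) (hprpos : 0 < pd + pr)
    :
    ((∫ ω, DY1 ω ∂(μ[|{ω | A ω = 1}])) / (∫ ω, DY1 ω ∂(μ[|{ω | A ω = 0}])) =
        (∫ ω, DY2 ω ∂(μ[|{ω | DY1 ω = 0 ∧ A ω = 1}])) /
          (∫ ω, DY2 ω ∂(μ[|{ω | DY1 ω = 0 ∧ A ω = 0}])) ↔
      ph = pr) ∧
    (ph = pr ↔
      ((μ[|{ω | A ω = 1}]) {ω | DY1 ω = 0}).toReal =
        ((μ[|{ω | A ω = 0}]) {ω | DY1 ω = 0}).toReal) := by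
  have h : IsTwoIntervalTrial μ A T E1 B2 DY1 E2 DY2 :=
    ⟨hAm, hTm, hE1m, hB2m, hindep, hAr, hE1r, hB2r, hDY1, hE2, hDY2⟩
  rw [← measureReal_def] at hA1 hT1 hT2 hT3 hE11 hB21
  have hA1ne : μ.real {ω | A ω = 1} ≠ 0 := hA1 ▸ hpiApos.ne'
  have hA0ne : μ.real {ω | A ω = 0} ≠ 0 := by
    rw [measureReal_setOf_eq_zero hAm hAr, hA1]
    linarith
  have hr1 : μ.real (T ⁻¹' susceptible 1) = pd + pr := by
    rw [susceptible_one, measureReal_setOf_eq_or_eq hTm (by norm_num), hT1, hT3]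
  have hr0 : μ.real (T ⁻¹' susceptible 0) = pd + ph := by
    rw [susceptible_zero, measureReal_setOf_eq_or_eq hTm (by norm_num), hT1, hT2]
  rw [← measureReal_def, ← measureReal_def, h.integral_DY1_cond_A hA1ne,
    h.integral_DY1_cond_A hA0ne, h.integral_DY2_cond_DY1_eq_zero_and_A hA1ne,
    h.integral_DY2_cond_DY1_eq_zero_and_A hA0ne, h.cond_A_real_DY1_eq_zero hA1ne,
    h.cond_A_real_DY1_eq_zero hA0ne, hr1, hr0, hE11, hB21,
    hazard_ratios_eq_iff hq1pos hq1lt hq2pos hprpos hprlt.le hphpos hphlt.le,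
    sub_right_inj, mul_left_inj' hq1pos.ne', add_right_inj, eq_comm]
  exact ⟨Iff.rfl, Iff.rfl⟩

/-- Hazard ratios are stable under the null only without a time-1 effect. -/
theorem hazard_ratios_stable_iff_no_time_one_effect
    {Ω : Type*} [MeasurableSpace Ω] (μ : Measure Ω) [IsProbabilityMeasure μ]
    (A T E1 B2 DY1 E2 DY2 : Ω → ℝ)
    (hAm : Measurable A) (hTm : Measurable T) (hE1m : Measurable E1) (hB2m : Measurable B2)
    (piA pd ph pr pim q1 q2 : ℝ)
    -- mutual independence of A, T, E1, B2
    (hindep : iIndepFun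
      ![A, T, E1, B2] μ)
    -- ranges
    (hAr : ∀ ω, A ω = 0 ∨ A ω = 1)
    (hTr : ∀ ω, T ω = 1 ∨ T ω = 2 ∨ T ω = 3 ∨ T ω = 4)
    (hE1r : ∀ ω, E1 ω = 0 ∨ E1 ω = 1)
    (hB2r : ∀ ω, B2 ω = 0 ∨ B2 ω = 1)
    -- marginal distributions
    (hA1 : (μ {ω | A ω = 1}).toReal = piA)
    (hT1 : (μ {ω | T ω = 1}).toReal = pd)
    (hT2 : (μ {ω | T ω = 2}).toReal = ph)
    (hT3 : (μ {ω | T ω = 3}).toReal = pr)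
    (hT4 : (μ {ω | T ω = 4}).toReal = pim)
    (hE11 : (μ {ω | E1 ω = 1}).toReal = q1)
    (hB21 : (μ {ω | B2 ω = 1}).toReal = q2)
    (hsumT : pd + ph + pr + pim = 1)
    -- structural equations
    (hDY1 : ∀ ω, DY1 ω = E1 ω *
      ((if T ω = 1 then 1 else 0) + (1 - A ω) * (if T ω = 2 then 1 else 0) +
        A ω * (if T ω = 3 then 1 else 0)))
    (hE2 : ∀ ω, E2 ω = (1 - DY1 ω) * B2 ω)
    (hDY2 : ∀ ω, DY2 ω = E2 ω *
      ((if T ω = 1 then 1 else 0) + (1 - A ω) * (if T ω = 2 then 1 else 0) +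
        A ω * (if T ω = 3 then 1 else 0)))
    -- parameter constraints
    (hq1pos : 0 < q1) (hq1lt : q1 < 1) (hq2pos : 0 < q2)
    (hpiApos : 0 < piA) (hpiAlt : piA < 1)
    (hphlt : pd + ph < 1) (hprlt : pd + pr < 1)
    (hphpos : 0 < pd + ph) (hprpos : 0 < pd + pr)
    :
    ((∫ ω, DY1 ω ∂(μ[|{ω | A ω = 1}])) / (∫ ω, DY1 ω ∂(μ[|{ω | A ω = 0}])) =
        (∫ ω, DY2 ω ∂(μ[|{ω | DY1 ω = 0 ∧ A ω = 1}])) /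
          (∫ ω, DY2 ω ∂(μ[|{ω | DY1 ω = 0 ∧ A ω = 0}])) ↔
      ph = pr) ∧
    (ph = pr ↔
      ((μ[|{ω | A ω = 1}]) {ω | DY1 ω = 0}).toReal =
        ((μ[|{ω | A ω = 0}]) {ω | DY1 ω = 0}).toReal) :=
  hazard_ratios_stable_iff_no_time_one_effect_general μ A T E1 B2 DY1 E2 DY2 hAm hTm hE1m hB2m piA
    pd ph pr q1 q2 hindep hAr hE1r hB2r hA1 hT1 hT2 hT3 hE11 hB21 hDY1 hE2 hDY2 hq1pos hq1lt hq2pos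
    hpiApos hpiAlt hphlt hprlt hphpos hprpos
end

section
/- Conditional invariant incidence ratios. Let L be a random variable into a countable measurable space, and let l be a value with P(L = l) > 0. Suppose that, under the conditional probability measure P(· | L = l), the hypotheses of Proposition 1 hold: Consistency, Exposure necessity, Exclusion restriction, Blinding, Treatment exchangeability, Positivity, Exposure exchangeability, the sharp null hypothesis of no waning, and the nondegeneracy conditions E[ΔY1 | A=0, L=l] > 0, E[ΔY2 | A=0, L=l] > 0, P(E1[0]=1 | L=l) > 0 and E[Y1[0,1] | L=l] > 0. Then the conditional incidence ratios are equal: E[ΔY1 | A=1, L=l]/E[ΔY1 | A=0, L=l] = E[ΔY2 | A=1, L=l]/E[ΔY2 | A=0, L=l]. -/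
/-!
On `{A = a}`, consistency and exposure necessity give `ΔY1 = E1[a] · Y1[a,1]` and
`ΔY2 = E2[a,0] · (1 - E1[a]) · Y2[a,1]`; the second identity needs the sharp null and the
exclusion restriction to rule out interval-2 events after an exposure at time 1. Treatment
exchangeability turns the conditional means given `A = a` into plain expectations, and exposure
exchangeability factors them as `E[E1[a]] · E[Y1[a,1]]` and
`E[E2[a,0] · (1 - E1[a])] · E[Y2[a,1]]`, where `E[Y2[a,1]] = E[Y1[a,1]]` by the sharp null.
Blinding makes the exposure factors independent of `a`, so both incidence ratios equal
`E[Y1[1,1]] / E[Y1[0,1]]`.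
-/

open MeasureTheory ProbabilityTheory

namespace ProbabilityTheory

variable {Ω β : Type*} [MeasurableSpace Ω] [MeasurableSpace β] {μ : Measure Ω}

lemma setIntegral_eq_measureReal_mul_integral_cond [IsFiniteMeasure μ] (s : Set Ω)
    (f : Ω → ℝ) : ∫ ω in s, f ω ∂μ = μ.real s * ∫ ω, f ω ∂μ[|s] := by
  by_cases hs : μ s = 0
  · simp [Measure.restrict_eq_zero.2 hs, measureReal_def, hs]
  · rw [cond, integral_smul_measure, smul_eq_mul, ← mul_assoc, ENNReal.toReal_inv,
      ← measureReal_def, mul_inv_cancel₀ ((measureReal_ne_zero_iff).2 hs), one_mul]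

lemma IndepFun.setIntegral_preimage_eq_mul {A : Ω → β} {G : Ω → ℝ} (h : IndepFun A G μ)
    (hA : Measurable A) (hG : AEMeasurable G μ) {t : Set β} (ht : MeasurableSet t) :
    ∫ ω in A ⁻¹' t, G ω ∂μ = μ.real (A ⁻¹' t) * ∫ ω, G ω ∂μ :=
  ((IndepFun_iff_Indep _ _ _).1 h).setIntegral_eq_mul (f := id) hA.comap_le hG ⟨t, ht, rfl⟩
    aestronglyMeasurable_id

lemma IndepFun.integral_cond_preimage_eq [IsFiniteMeasure μ] {A : Ω → β} {G : Ω → ℝ}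
    (h : IndepFun A G μ) (hA : Measurable A) (hG : AEMeasurable G μ) {t : Set β}
    (ht : MeasurableSet t) (hne : μ (A ⁻¹' t) ≠ 0) :
    ∫ ω, G ω ∂μ[|A ⁻¹' t] = ∫ ω, G ω ∂μ := by
  have h' := setIntegral_eq_measureReal_mul_integral_cond (μ := μ) (A ⁻¹' t) G
  rw [h.setIntegral_preimage_eq_mul hA hG ht] at h'
  exact (mul_left_cancel₀ ((measureReal_ne_zero_iff).2 hne) h').symm

lemma IndepFun.integral_cond_preimage_eq_of_ae_eq [IsFiniteMeasure μ] {A : Ω → β}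
    {G Y : Ω → ℝ} (h : IndepFun A G μ) (hA : Measurable A) (hG : AEMeasurable G μ)
    {t : Set β} (ht : MeasurableSet t) (hne : μ (A ⁻¹' t) ≠ 0)
    (hYG : ∀ᵐ ω ∂μ, A ω ∈ t → Y ω = G ω) :
    ∫ ω, Y ω ∂μ[|A ⁻¹' t] = ∫ ω, G ω ∂μ := by
  rw [← h.integral_cond_preimage_eq hA hG ht hne]
  refine integral_congr_ae ?_
  filter_upwards [ae_cond_mem (hA ht), cond_absolutelyContinuous.ae_le hYG] with ω hω hYGω
  exact hYGω hω

lemma integral_mul_eq_measureReal_mul_integral_cond [IsFiniteMeasure μ] {E F : Ω → ℝ}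
    (hE : ∀ ω, E ω = 0 ∨ E ω = 1) (hEm : Measurable E) :
    ∫ ω, E ω * F ω ∂μ = μ.real {ω | E ω = 1} * ∫ ω, F ω ∂μ[|{ω | E ω = 1}] := by
  have hT : MeasurableSet {ω | E ω = 1} := hEm (measurableSet_singleton 1)
  rw [← setIntegral_eq_measureReal_mul_integral_cond, ← integral_indicator hT]
  congr 1 with ω
  rcases hE ω with h | h <;> simp [h]

lemma integral_mul_mul_eq_of_indepFun_cond [IsProbabilityMeasure μ] {E F Y : Ω → ℝ}
    (hE : ∀ ω, E ω = 0 ∨ E ω = 1) (hEm : Measurable E) (hFm : Measurable F)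
    (hYm : Measurable Y) (hFY : IndepFun F Y μ[|{ω | E ω = 1}]) (hEY : IndepFun E Y μ) :
    ∫ ω, E ω * F ω * Y ω ∂μ = (∫ ω, E ω * F ω ∂μ) * ∫ ω, Y ω ∂μ := by
  set T := {ω | E ω = 1}
  have hY : μ.real T * ∫ ω, Y ω ∂μ[|T] = μ.real T * ∫ ω, Y ω ∂μ := by
    by_cases hT : μ T = 0
    · simp [measureReal_def, hT]
    · congr 1
      exact hEY.integral_cond_preimage_eq hEm hYm.aemeasurable (measurableSet_singleton 1) hT
  calc ∫ ω, E ω * F ω * Y ω ∂μ = μ.real T * ∫ ω, F ω * Y ω ∂μ[|T] := by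
        simp_rw [mul_assoc]
        exact integral_mul_eq_measureReal_mul_integral_cond hE hEm
    _ = μ.real T * (∫ ω, F ω ∂μ[|T]) * ∫ ω, Y ω ∂μ[|T] := by
        rw [hFY.integral_fun_mul_eq_mul_integral hFm.aestronglyMeasurable
          hYm.aestronglyMeasurable, mul_assoc]
    _ = (∫ ω, E ω * F ω ∂μ) * ∫ ω, Y ω ∂μ := by
        rw [integral_mul_eq_measureReal_mul_integral_cond hE hEm, mul_right_comm, hY,
          mul_right_comm]

lemma measure_setOf_eq_zero_ne_zero_of_lt_one [IsProbabilityMeasure μ] {A : Ω → ℝ}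
    (hA : Measurable A) (hAr : ∀ ω, A ω = 0 ∨ A ω = 1) (h : μ.real {ω | A ω = 1} < 1) :
    μ {ω | A ω = 0} ≠ 0 := by
  have hcompl : {ω | A ω = 0} = {ω | A ω = 1}ᶜ := by
    ext ω
    rcases hAr ω with h | h <;> simp [h]
  have h1 : MeasurableSet {ω | A ω = 1} := hA (measurableSet_singleton 1)
  rw [← measureReal_ne_zero_iff, hcompl, probReal_compl_eq_one_sub h1]
  linarith

end ProbabilityTheory

section PotentialOutcomes

variable {Ω : Type*} [MeasurableSpace Ω] {μ : Measure Ω} {A E1 E2 DY1 DY2 : Ω → ℝ}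
  {E1p : ℝ → Ω → ℝ} {E2p Y1p Y2p Wp : ℝ → ℝ → Ω → ℝ} {a : ℝ}

lemma firstIntervalOutcome_ae_eq (hE1r : ∀ ω, E1 ω = 0 ∨ E1 ω = 1)
    (hconsE1 : ∀ᵐ ω ∂μ, A ω = a → E1 ω = E1p a ω)
    (hconsY1 : ∀ e1 ∈ ({0, 1} : Set ℝ), ∀ᵐ ω ∂μ, A ω = a → E1 ω = e1 → DY1 ω = Y1p a e1 ω)
    (hnecY1 : ∀ᵐ ω ∂μ, Y1p a 0 ω = 0) :
    ∀ᵐ ω ∂μ, A ω = a → DY1 ω = E1p a ω * Y1p a 1 ω := by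
  filter_upwards [hconsE1, hconsY1 0 (by simp), hconsY1 1 (by simp), hnecY1]
    with ω hE1 hY0 hY1 hnec hA
  rcases hE1r ω with h | h
  · rw [hY0 hA h, hnec, ← hE1 hA, h, zero_mul]
  · rw [hY1 hA h, ← hE1 hA, h, one_mul]

-- Under the sharp null, whoever is exposed at time 1 and escapes the event in interval 1
-- has `Y2[a,1] = Y1[a,1] = 0`, so by exclusion restriction escapes it in interval 2 as well.
lemma secondIntervalOutcome_eq_zero_of_exposed (hE2r : ∀ ω, E2 ω = 0 ∨ E2 ω = 1)
    (hDY1r : ∀ ω, DY1 ω = 0 ∨ DY1 ω = 1) (hmono : ∀ ω, DY1 ω = 1 → DY2 ω = 0)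
    (hconsY1 : ∀ e1 ∈ ({0, 1} : Set ℝ), ∀ᵐ ω ∂μ, A ω = a → E1 ω = e1 → DY1 ω = Y1p a e1 ω)
    (hconsW : ∀ e1 ∈ ({0, 1} : Set ℝ),
      ∀ᵐ ω ∂μ, A ω = a → E1 ω = e1 → DY1 ω = 0 → E2 ω = 1 → DY2 ω = Wp a e1 ω)
    (hnecE2 : ∀ᵐ ω ∂μ, E2 ω = 0 → DY2 ω = 0) (hexcl : ∀ᵐ ω ∂μ, Wp a 1 ω = Y2p a 1 ω)
    (hnull : ∀ᵐ ω ∂μ, Y1p a 1 ω = Y2p a 1 ω) :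
    ∀ᵐ ω ∂μ, A ω = a → E1 ω = 1 → DY2 ω = 0 := by
  filter_upwards [hconsY1 1 (by simp), hconsW 1 (by simp), hnecE2, hexcl, hnull]
    with ω hY1 hW hnec hexclω hnullω hA hE1
  rcases hDY1r ω with hD | hD
  · rcases hE2r ω with hE2 | hE2
    · exact hnec hE2
    · rw [hW hA hE1 hD hE2, hexclω, ← hnullω, ← hY1 hA hE1, hD]
  · exact hmono ω hD

lemma secondIntervalOutcome_ae_eq (hE1r : ∀ ω, E1 ω = 0 ∨ E1 ω = 1)
    (hE2r : ∀ ω, E2 ω = 0 ∨ E2 ω = 1) (hDY1r : ∀ ω, DY1 ω = 0 ∨ DY1 ω = 1)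
    (hmono : ∀ ω, DY1 ω = 1 → DY2 ω = 0)
    (hconsE1 : ∀ᵐ ω ∂μ, A ω = a → E1 ω = E1p a ω)
    (hconsY1 : ∀ e1 ∈ ({0, 1} : Set ℝ), ∀ᵐ ω ∂μ, A ω = a → E1 ω = e1 → DY1 ω = Y1p a e1 ω)
    (hconsE2 : ∀ e1 ∈ ({0, 1} : Set ℝ), ∀ᵐ ω ∂μ, A ω = a → E1 ω = e1 → E2 ω = E2p a e1 ω)
    (hconsY2 : ∀ e2 ∈ ({0, 1} : Set ℝ),
      ∀ᵐ ω ∂μ, A ω = a → E1 ω = 0 → E2 ω = e2 → DY2 ω = Y2p a e2 ω)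
    (hconsW : ∀ e1 ∈ ({0, 1} : Set ℝ),
      ∀ᵐ ω ∂μ, A ω = a → E1 ω = e1 → DY1 ω = 0 → E2 ω = 1 → DY2 ω = Wp a e1 ω)
    (hnecE2 : ∀ᵐ ω ∂μ, E2 ω = 0 → DY2 ω = 0) (hexcl : ∀ᵐ ω ∂μ, Wp a 1 ω = Y2p a 1 ω)
    (hnull : ∀ᵐ ω ∂μ, Y1p a 1 ω = Y2p a 1 ω) :
    ∀ᵐ ω ∂μ, A ω = a → DY2 ω = E2p a 0 ω * (1 - E1p a ω) * Y2p a 1 ω := by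
  filter_upwards [hconsE1, hconsE2 0 (by simp), hconsY2 1 (by simp), hnecE2,
    secondIntervalOutcome_eq_zero_of_exposed hE2r hDY1r hmono hconsY1 hconsW hnecE2 hexcl hnull]
    with ω hE1 hE2 hY2 hnec hexposed hA
  rcases hE1r ω with h1 | h1
  · rcases hE2r ω with h2 | h2
    · rw [hnec h2, ← hE2 hA h1, h2, zero_mul, zero_mul]
    · rw [hY2 hA h1 h2, ← hE1 hA, ← hE2 hA h1, h1, h2]
      ring
  · rw [hexposed hA h1, ← hE1 hA, h1]
    ring

end PotentialOutcomes

theorem conditional_invariant_incidence_ratios_general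
    {Ω : Type*} [MeasurableSpace Ω] (P : Measure Ω) [IsProbabilityMeasure P]
    {α : Type*}
    (L : Ω → α) (l : α)
    (hl : 0 < (P {ω | L ω = l}).toReal)
    -- the conditional measure given `L = l`, under which all hypotheses below are imposed
    (μ : Measure Ω) (hcond : μ = P[|{ω | L ω = l}])
    (A E1 E2 DY1 DY2 : Ω → ℝ)
    (E1p : ℝ → Ω → ℝ) (E2p Y1p Y2p Wp : ℝ → ℝ → Ω → ℝ)
    (hAm : Measurable A)
    (hE1pm : ∀ a ∈ ({0, 1} : Set ℝ), Measurable (E1p a))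
    (hE2pm : ∀ a ∈ ({0, 1} : Set ℝ), ∀ e1 ∈ ({0, 1} : Set ℝ), Measurable (E2p a e1))
    (hY1pm : ∀ a ∈ ({0, 1} : Set ℝ), ∀ e1 ∈ ({0, 1} : Set ℝ), Measurable (Y1p a e1))
    (hY2pm : ∀ a ∈ ({0, 1} : Set ℝ), ∀ e2 ∈ ({0, 1} : Set ℝ), Measurable (Y2p a e2))
    (hAr : ∀ ω, A ω = 0 ∨ A ω = 1) (hE1r : ∀ ω, E1 ω = 0 ∨ E1 ω = 1)
    (hE2r : ∀ ω, E2 ω = 0 ∨ E2 ω = 1)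
    (hDY1r : ∀ ω, DY1 ω = 0 ∨ DY1 ω = 1)
    (hE2pr : ∀ a ∈ ({0, 1} : Set ℝ), ∀ e1 ∈ ({0, 1} : Set ℝ), ∀ ω,
      E2p a e1 ω = 0 ∨ E2p a e1 ω = 1)
    (hmono : ∀ ω, DY1 ω = 1 → DY2 ω = 0)
    -- Consistency
    (hconsE1 : ∀ a ∈ ({0, 1} : Set ℝ), ∀ᵐ ω ∂μ, A ω = a → E1 ω = E1p a ω)
    (hconsY1 : ∀ a ∈ ({0, 1} : Set ℝ), ∀ e1 ∈ ({0, 1} : Set ℝ),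
      ∀ᵐ ω ∂μ, A ω = a → E1 ω = e1 → DY1 ω = Y1p a e1 ω)
    (hconsE2 : ∀ a ∈ ({0, 1} : Set ℝ), ∀ e1 ∈ ({0, 1} : Set ℝ),
      ∀ᵐ ω ∂μ, A ω = a → E1 ω = e1 → E2 ω = E2p a e1 ω)
    (hconsY2 : ∀ a ∈ ({0, 1} : Set ℝ), ∀ e2 ∈ ({0, 1} : Set ℝ),
      ∀ᵐ ω ∂μ, A ω = a → E1 ω = 0 → E2 ω = e2 → DY2 ω = Y2p a e2 ω)
    (hconsW : ∀ a ∈ ({0, 1} : Set ℝ), ∀ e1 ∈ ({0, 1} : Set ℝ),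
      ∀ᵐ ω ∂μ, A ω = a → E1 ω = e1 → DY1 ω = 0 → E2 ω = 1 → DY2 ω = Wp a e1 ω)
    -- Exposure necessity
    (hnecY1 : ∀ a ∈ ({0, 1} : Set ℝ), ∀ᵐ ω ∂μ, Y1p a 0 ω = 0)
    (hnecE2 : ∀ᵐ ω ∂μ, E2 ω = 0 → DY2 ω = 0)
    -- Exclusion restriction
    (hexcl : ∀ a ∈ ({0, 1} : Set ℝ), ∀ᵐ ω ∂μ, Wp a 1 ω = Y2p a 1 ω ∧ Wp a 0 ω = Y2p a 1 ω)
    -- Blinding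
    (hblind1 : ∀ᵐ ω ∂μ, E1p 0 ω = E1p 1 ω)
    (hblind2 : ∀ᵐ ω ∂μ, E2p 0 0 ω = E2p 1 0 ω)
    -- Treatment exchangeability
    (hexch : IndepFun A (fun ω => ![E1p 0 ω, E1p 1 ω,
      E2p 0 0 ω, E2p 0 1 ω, E2p 1 0 ω, E2p 1 1 ω,
      Y1p 0 0 ω, Y1p 0 1 ω, Y1p 1 0 ω, Y1p 1 1 ω,
      Y2p 0 0 ω, Y2p 0 1 ω, Y2p 1 0 ω, Y2p 1 1 ω,
      Wp 0 0 ω, Wp 0 1 ω, Wp 1 0 ω, Wp 1 1 ω]) μ)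
    -- Positivity
    (hpos : 0 < (μ {ω | A ω = 1}).toReal ∧ (μ {ω | A ω = 1}).toReal < 1)
    -- Exposure exchangeability
    (heeY1 : ∀ a ∈ ({0, 1} : Set ℝ), ∀ e1 ∈ ({0, 1} : Set ℝ), IndepFun (E1p a) (Y1p a e1) μ)
    (heeY2cond : ∀ a ∈ ({0, 1} : Set ℝ), ∀ e2 ∈ ({0, 1} : Set ℝ), ∀ e ∈ ({0, 1} : Set ℝ),
      IndepFun (E1p a) (Y2p a e2) (μ[|{ω | E2p a 0 ω = e}]))
    (heeE2 : ∀ a ∈ ({0, 1} : Set ℝ), ∀ e2 ∈ ({0, 1} : Set ℝ), IndepFun (E2p a 0) (Y2p a e2) μ)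
    -- Sharp null hypothesis of no waning
    (hnull : ∀ a ∈ ({0, 1} : Set ℝ), ∀ᵐ ω ∂μ, Y1p a 1 ω = Y2p a 1 ω)
    -- Nondegeneracy (conditional on L = l)
    (hd1 : 0 < ∫ ω, DY1 ω ∂(μ[|{ω | A ω = 0}]))
    (hd2 : 0 < ∫ ω, DY2 ω ∂(μ[|{ω | A ω = 0}])) :
    (∫ ω, DY1 ω ∂(μ[|{ω | A ω = 1}])) / (∫ ω, DY1 ω ∂(μ[|{ω | A ω = 0}])) =
      (∫ ω, DY2 ω ∂(μ[|{ω | A ω = 1}])) / (∫ ω, DY2 ω ∂(μ[|{ω | A ω = 0}])) := by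
  have hS0 : (0 : ℝ) ∈ ({0, 1} : Set ℝ) := by simp
  have hS1 : (1 : ℝ) ∈ ({0, 1} : Set ℝ) := by simp
  have : IsProbabilityMeasure μ :=
    hcond ▸ cond_isProbabilityMeasure ((measureReal_ne_zero_iff).1 hl.ne')
  have harm : ∀ a ∈ ({0, 1} : Set ℝ), μ {ω | A ω = a} ≠ 0 := by
    rintro a (rfl | rfl)
    · exact measure_setOf_eq_zero_ne_zero_of_lt_one hAm hAr hpos.2
    · exact (measureReal_ne_zero_iff).1 hpos.1.ne'
  have hfirst : ∀ a ∈ ({0, 1} : Set ℝ),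
      ∫ ω, DY1 ω ∂(μ[|{ω | A ω = a}]) = (∫ ω, E1p a ω ∂μ) * ∫ ω, Y1p a 1 ω ∂μ := by
    intro a ha
    rw [← (heeY1 a ha 1 hS1).integral_fun_mul_eq_mul_integral
      (hE1pm a ha).aestronglyMeasurable (hY1pm a ha 1 hS1).aestronglyMeasurable]
    refine IndepFun.integral_cond_preimage_eq_of_ae_eq ?_ hAm (by fun_prop)
      (measurableSet_singleton a) (harm a ha)
      (firstIntervalOutcome_ae_eq hE1r (hconsE1 a ha) (hconsY1 a ha) (hnecY1 a ha))
    rcases ha with rfl | rfl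
    · exact hexch.comp (ψ := fun v : Fin 18 → ℝ => v 0 * v 7) measurable_id (by fun_prop)
    · exact hexch.comp (ψ := fun v : Fin 18 → ℝ => v 1 * v 9) measurable_id (by fun_prop)
  have hsecond : ∀ a ∈ ({0, 1} : Set ℝ), ∫ ω, DY2 ω ∂(μ[|{ω | A ω = a}]) =
      (∫ ω, E2p a 0 ω * (1 - E1p a ω) ∂μ) * ∫ ω, Y1p a 1 ω ∂μ := by
    intro a ha
    have hexposure : IndepFun (fun ω => 1 - E1p a ω) (Y2p a 1) μ[|{ω | E2p a 0 ω = 1}] :=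
      (heeY2cond a ha 1 hS1 1 hS1).comp (ψ := id) (measurable_const.sub measurable_id)
        measurable_id
    rw [integral_congr_ae (hnull a ha), ← integral_mul_mul_eq_of_indepFun_cond
      (hE2pr a ha 0 hS0) (hE2pm a ha 0 hS0) (by fun_prop) (hY2pm a ha 1 hS1) hexposure
      (heeE2 a ha 1 hS1)]
    refine IndepFun.integral_cond_preimage_eq_of_ae_eq ?_ hAm (by fun_prop)
      (measurableSet_singleton a) (harm a ha)
      (secondIntervalOutcome_ae_eq hE1r hE2r hDY1r hmono (hconsE1 a ha) (hconsY1 a ha)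
        (hconsE2 a ha) (hconsY2 a ha) (hconsW a ha) hnecE2 ((hexcl a ha).mono fun _ h => h.1)
        (hnull a ha))
    rcases ha with rfl | rfl
    · exact hexch.comp (ψ := fun v : Fin 18 → ℝ => v 2 * (1 - v 0) * v 11) measurable_id
        (by fun_prop)
    · exact hexch.comp (ψ := fun v : Fin 18 → ℝ => v 4 * (1 - v 1) * v 13) measurable_id
        (by fun_prop)
  have hblind_first : ∫ ω, E1p 1 ω ∂μ = ∫ ω, E1p 0 ω ∂μ :=
    integral_congr_ae (hblind1.mono fun _ h => h.symm)
  have hblind_second : ∫ ω, E2p 1 0 ω * (1 - E1p 1 ω) ∂μ = ∫ ω, E2p 0 0 ω * (1 - E1p 0 ω) ∂μ :=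
    integral_congr_ae (by filter_upwards [hblind1, hblind2] with ω h1 h2; rw [h1, h2])
  rw [hfirst 0 hS0] at hd1
  rw [hsecond 0 hS0] at hd2
  rw [hfirst 0 hS0, hfirst 1 hS1, hsecond 0 hS0, hsecond 1 hS1, hblind_first, hblind_second,
    mul_div_mul_left _ _ (left_ne_zero_of_mul hd1.ne'),
    mul_div_mul_left _ _ (left_ne_zero_of_mul hd2.ne')]

/-- Conditional invariant incidence ratios: Proposition 1 under `P(· | L = l)`. -/
theorem conditional_invariant_incidence_ratios
    {Ω : Type*} [MeasurableSpace Ω] (P : Measure Ω) [IsProbabilityMeasure P]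
    {α : Type*} [MeasurableSpace α] [MeasurableSingletonClass α] [Countable α]
    (L : Ω → α) (hLm : Measurable L) (l : α)
    (hl : 0 < (P {ω | L ω = l}).toReal)
    -- the conditional measure given `L = l`, under which all hypotheses below are imposed
    (μ : Measure Ω) (hcond : μ = P[|{ω | L ω = l}])
    (A E1 E2 DY1 DY2 : Ω → ℝ)
    (E1p : ℝ → Ω → ℝ) (E2p Y1p Y2p Wp : ℝ → ℝ → Ω → ℝ)
    (hAm : Measurable A) (hE1m : Measurable E1) (hE2m : Measurable E2)
    (hDY1m : Measurable DY1) (hDY2m : Measurable DY2)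
    (hE1pm : ∀ a ∈ ({0, 1} : Set ℝ), Measurable (E1p a))
    (hE2pm : ∀ a ∈ ({0, 1} : Set ℝ), ∀ e1 ∈ ({0, 1} : Set ℝ), Measurable (E2p a e1))
    (hY1pm : ∀ a ∈ ({0, 1} : Set ℝ), ∀ e1 ∈ ({0, 1} : Set ℝ), Measurable (Y1p a e1))
    (hY2pm : ∀ a ∈ ({0, 1} : Set ℝ), ∀ e2 ∈ ({0, 1} : Set ℝ), Measurable (Y2p a e2))
    (hWpm : ∀ a ∈ ({0, 1} : Set ℝ), ∀ e1 ∈ ({0, 1} : Set ℝ), Measurable (Wp a e1))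
    (hAr : ∀ ω, A ω = 0 ∨ A ω = 1) (hE1r : ∀ ω, E1 ω = 0 ∨ E1 ω = 1)
    (hE2r : ∀ ω, E2 ω = 0 ∨ E2 ω = 1)
    (hDY1r : ∀ ω, DY1 ω = 0 ∨ DY1 ω = 1) (hDY2r : ∀ ω, DY2 ω = 0 ∨ DY2 ω = 1)
    (hE1pr : ∀ a ∈ ({0, 1} : Set ℝ), ∀ ω, E1p a ω = 0 ∨ E1p a ω = 1)
    (hE2pr : ∀ a ∈ ({0, 1} : Set ℝ), ∀ e1 ∈ ({0, 1} : Set ℝ), ∀ ω,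
      E2p a e1 ω = 0 ∨ E2p a e1 ω = 1)
    (hY1pr : ∀ a ∈ ({0, 1} : Set ℝ), ∀ e1 ∈ ({0, 1} : Set ℝ), ∀ ω,
      Y1p a e1 ω = 0 ∨ Y1p a e1 ω = 1)
    (hY2pr : ∀ a ∈ ({0, 1} : Set ℝ), ∀ e2 ∈ ({0, 1} : Set ℝ), ∀ ω,
      Y2p a e2 ω = 0 ∨ Y2p a e2 ω = 1)
    (hWpr : ∀ a ∈ ({0, 1} : Set ℝ), ∀ e1 ∈ ({0, 1} : Set ℝ), ∀ ω,
      Wp a e1 ω = 0 ∨ Wp a e1 ω = 1)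
    (hmono : ∀ ω, DY1 ω = 1 → DY2 ω = 0)
    -- Consistency
    (hconsE1 : ∀ a ∈ ({0, 1} : Set ℝ), ∀ᵐ ω ∂μ, A ω = a → E1 ω = E1p a ω)
    (hconsY1 : ∀ a ∈ ({0, 1} : Set ℝ), ∀ e1 ∈ ({0, 1} : Set ℝ),
      ∀ᵐ ω ∂μ, A ω = a → E1 ω = e1 → DY1 ω = Y1p a e1 ω)
    (hconsE2 : ∀ a ∈ ({0, 1} : Set ℝ), ∀ e1 ∈ ({0, 1} : Set ℝ),
      ∀ᵐ ω ∂μ, A ω = a → E1 ω = e1 → E2 ω = E2p a e1 ω)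
    (hconsY2 : ∀ a ∈ ({0, 1} : Set ℝ), ∀ e2 ∈ ({0, 1} : Set ℝ),
      ∀ᵐ ω ∂μ, A ω = a → E1 ω = 0 → E2 ω = e2 → DY2 ω = Y2p a e2 ω)
    (hconsW : ∀ a ∈ ({0, 1} : Set ℝ), ∀ e1 ∈ ({0, 1} : Set ℝ),
      ∀ᵐ ω ∂μ, A ω = a → E1 ω = e1 → DY1 ω = 0 → E2 ω = 1 → DY2 ω = Wp a e1 ω)
    -- Exposure necessity
    (hnecY1 : ∀ a ∈ ({0, 1} : Set ℝ), ∀ᵐ ω ∂μ, Y1p a 0 ω = 0)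
    (hnecY2 : ∀ a ∈ ({0, 1} : Set ℝ), ∀ᵐ ω ∂μ, Y2p a 0 ω = 0)
    (hnecE2 : ∀ᵐ ω ∂μ, E2 ω = 0 → DY2 ω = 0)
    -- Exclusion restriction
    (hexcl : ∀ a ∈ ({0, 1} : Set ℝ), ∀ᵐ ω ∂μ, Wp a 1 ω = Y2p a 1 ω ∧ Wp a 0 ω = Y2p a 1 ω)
    -- Blinding
    (hblind1 : ∀ᵐ ω ∂μ, E1p 0 ω = E1p 1 ω)
    (hblind2 : ∀ᵐ ω ∂μ, E2p 0 0 ω = E2p 1 0 ω)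
    -- Treatment exchangeability
    (hexch : IndepFun A (fun ω => ![E1p 0 ω, E1p 1 ω,
      E2p 0 0 ω, E2p 0 1 ω, E2p 1 0 ω, E2p 1 1 ω,
      Y1p 0 0 ω, Y1p 0 1 ω, Y1p 1 0 ω, Y1p 1 1 ω,
      Y2p 0 0 ω, Y2p 0 1 ω, Y2p 1 0 ω, Y2p 1 1 ω,
      Wp 0 0 ω, Wp 0 1 ω, Wp 1 0 ω, Wp 1 1 ω]) μ)
    -- Positivity
    (hpos : 0 < (μ {ω | A ω = 1}).toReal ∧ (μ {ω | A ω = 1}).toReal < 1)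
    -- Exposure exchangeability
    (heeY1 : ∀ a ∈ ({0, 1} : Set ℝ), ∀ e1 ∈ ({0, 1} : Set ℝ), IndepFun (E1p a) (Y1p a e1) μ)
    (heeY2cond : ∀ a ∈ ({0, 1} : Set ℝ), ∀ e2 ∈ ({0, 1} : Set ℝ), ∀ e ∈ ({0, 1} : Set ℝ),
      IndepFun (E1p a) (Y2p a e2) (μ[|{ω | E2p a 0 ω = e}]))
    (heeE2 : ∀ a ∈ ({0, 1} : Set ℝ), ∀ e2 ∈ ({0, 1} : Set ℝ), IndepFun (E2p a 0) (Y2p a e2) μ)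
    -- Sharp null hypothesis of no waning
    (hnull : ∀ a ∈ ({0, 1} : Set ℝ), ∀ᵐ ω ∂μ, Y1p a 1 ω = Y2p a 1 ω)
    -- Nondegeneracy (conditional on L = l)
    (hd1 : 0 < ∫ ω, DY1 ω ∂(μ[|{ω | A ω = 0}]))
    (hd2 : 0 < ∫ ω, DY2 ω ∂(μ[|{ω | A ω = 0}]))
    (hd3 : 0 < (μ {ω | E1p 0 ω = 1}).toReal)
    (hd4 : 0 < ∫ ω, Y1p 0 1 ω ∂μ) :
    (∫ ω, DY1 ω ∂(μ[|{ω | A ω = 1}])) / (∫ ω, DY1 ω ∂(μ[|{ω | A ω = 0}])) =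
      (∫ ω, DY2 ω ∂(μ[|{ω | A ω = 1}])) / (∫ ω, DY2 ω ∂(μ[|{ω | A ω = 0}])) :=
  conditional_invariant_incidence_ratios_general P L l hl μ hcond A E1 E2 DY1 DY2 E1p E2p Y1p Y2p Wp
    hAm hE1pm hE2pm hY1pm hY2pm hAr hE1r hE2r hDY1r hE2pr hmono hconsE1 hconsY1 hconsE2 hconsY2
    hconsW hnecY1 hnecE2 hexcl hblind1 hblind2 hexch hpos heeY1 heeY2cond heeE2 hnull hd1 hd2
end
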